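/- Let x ∈ ℝ^d and 0 < t < s, and define h_{s,t,x}(y) = ∫_{|y−x|}^∞ (W(r/t) − W(r/s))/(C_d r^{d−1}) dr, where W(r) = min{1, r^d}. Then ∫_{ℝ^d} h_{s,t,x}(y) dy = (s² − t²)/(2(d+2)). -/

import Mathlib

open MeasureTheory Metric Filter Real
open scoped ENNReal Topology

noncomputable section

/-- Euclidean space `ℝ^d`. -/
abbrev Euc (d : ℕ) := EuclideanSpace ℝ (Fin d)

/-- `C_d = 2π^{d/2}/Γ(d/2)`, the surface area of the unit sphere in `ℝ^d`. -/
noncomputable def Cd (d : ℕ) : ℝ := 2 * π ^ ((d : ℝ) / 2) / Real.Gamma ((d : ℝ) / 2)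

/-- `W(r) = min {1, r^d}`. -/
def W (d : ℕ) (r : ℝ) : ℝ := min 1 (r ^ d)

/-- `h_{s,t,x}(y) = ∫_{|y−x|}^∞ (W(r/t) − W(r/s))/(C_d r^{d−1}) dr`. -/
noncomputable def hst (d : ℕ) (s t : ℝ) (x y : Euc d) : ℝ :=
  ∫ r in Set.Ioi (dist y x), (W d (r / t) - W d (r / s)) / (Cd d * r ^ (d - 1))

/-!
Write `h(y) = ∫_{|y-x|}^∞ f(u) du`. By Fubini,
`∫ h = ∫_0^∞ f(u) |B(x, u)| du = |B| ∫_0^∞ u^d f(u) du` with `B` the unit ball, and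
`u^d f(u) = (W(u/t) - W(u/s)) u / C_d`. Since `C_d = d |B|`, this is
`(1/d) ∫_0^s (W(u/t) - W(u/s)) u du` (the integrand vanishes beyond `s`), an elementary integral
equal to `(s² - t²) d / (2(d+2))`.
-/

open Set Module

section AddHaar

variable {E : Type*} [NormedAddCommGroup E] [NormedSpace ℝ E] [FiniteDimensional ℝ E]
  [MeasurableSpace E] [BorelSpace E] (μ : Measure E) [μ.IsAddHaarMeasure]

theorem addHaar_real_ball_of_pos (x : E) {r : ℝ} (hr : 0 < r) :
    μ.real (ball x r) = r ^ finrank ℝ E * μ.real (ball (0 : E) 1) := by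
  rw [measureReal_def, Measure.addHaar_ball_of_pos μ x hr, ENNReal.toReal_mul,
    ENNReal.toReal_ofReal (by positivity), measureReal_def]

theorem aestronglyMeasurable_of_integrableOn_pow_mul {f : ℝ → ℝ} {k : ℕ}
    (hf : IntegrableOn (fun u => u ^ k * f u) (Ioi 0)) :
    AEStronglyMeasurable f (volume.restrict (Ioi 0)) := by
  refine ((measurable_id.pow_const k).inv.aestronglyMeasurable.mul
    hf.aestronglyMeasurable).congr ?_
  filter_upwards [ae_restrict_mem measurableSet_Ioi] with u (hu : 0 < u)
  simp [hu.ne']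

theorem integral_integral_Ioi_dist (x : E) {f : ℝ → ℝ}
    (hf : IntegrableOn (fun u => u ^ finrank ℝ E * f u) (Ioi 0)) :
    ∫ y, (∫ u in Ioi (dist y x), f u) ∂μ
      = μ.real (ball (0 : E) 1) * ∫ u in Ioi 0, u ^ finrank ℝ E * f u := by
  set k := finrank ℝ E
  set F : E → ℝ → ℝ := fun y u => (Ioi (dist y x)).indicator f u
  have hF_ball : ∀ y u, F y u = (ball x u).indicator (fun _ => f u) y := fun y u => by
    simp only [F, indicator, mem_Ioi, mem_ball]
  have hF_meas : AEStronglyMeasurable (Function.uncurry F) (μ.prod (volume.restrict (Ioi 0))) :=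
    (aestronglyMeasurable_of_integrableOn_pow_mul hf).comp_snd.indicator
      (measurableSet_lt (continuous_fst.dist continuous_const).measurable measurable_snd)
  have hF_y : ∀ u ∈ Ioi (0 : ℝ), ∫ y, F y u ∂μ = μ.real (ball (0 : E) 1) * (u ^ k * f u) := by
    intro u hu
    simp_rw [hF_ball, integral_indicator_const _ measurableSet_ball, smul_eq_mul,
      addHaar_real_ball_of_pos μ x hu]
    ring
  have hF_int : Integrable (Function.uncurry F) (μ.prod (volume.restrict (Ioi 0))) := by
    refine (integrable_prod_iff' hF_meas).2 ⟨?_, ?_⟩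
    · filter_upwards [ae_restrict_mem measurableSet_Ioi] with u hu
      simp_rw [Function.uncurry_apply_pair, hF_ball]
      exact (integrable_indicator_iff measurableSet_ball).2
        (integrableOn_const measure_ball_lt_top.ne)
    · refine (hf.norm.const_mul (μ.real (ball (0 : E) 1))).congr ?_
      filter_upwards [ae_restrict_mem measurableSet_Ioi] with u (hu : 0 < u)
      simp_rw [Function.uncurry_apply_pair, hF_ball, norm_indicator_eq_indicator_norm,
        integral_indicator_const _ measurableSet_ball, smul_eq_mul,
        addHaar_real_ball_of_pos μ x hu, norm_mul, norm_pow, norm_of_nonneg hu.le]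
      ring
  calc ∫ y, (∫ u in Ioi (dist y x), f u) ∂μ
      = ∫ y, (∫ u in Ioi 0, F y u) ∂μ := by
        refine integral_congr_ae (Eventually.of_forall fun y => ?_)
        simp only [F]
        rw [setIntegral_indicator measurableSet_Ioi, Ioi_inter_Ioi, max_eq_right dist_nonneg]
    _ = ∫ u in Ioi 0, ∫ y, F y u ∂μ := integral_integral_swap hF_int
    _ = ∫ u in Ioi 0, μ.real (ball (0 : E) 1) * (u ^ k * f u) :=
        setIntegral_congr_fun measurableSet_Ioi hF_y
    _ = μ.real (ball (0 : E) 1) * ∫ u in Ioi 0, u ^ k * f u := integral_const_mul _ _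

end AddHaar

theorem Cd_eq_mul_volume_real_ball {d : ℕ} (hd : 1 ≤ d) :
    Cd d = d * volume.real (ball (0 : Euc d) 1) := by
  have : Nonempty (Fin d) := ⟨⟨0, hd⟩⟩
  have hd0 : (d : ℝ) / 2 ≠ 0 := by positivity
  rw [measureReal_def, EuclideanSpace.volume_ball, Fintype.card_fin, ENNReal.ofReal_one, one_pow,
    one_mul, ENNReal.toReal_ofReal (by positivity), Real.Gamma_add_one hd0, Cd,
    Real.sqrt_eq_rpow, ← Real.rpow_natCast, ← Real.rpow_mul Real.pi_pos.le]
  field_simp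

theorem W_of_le_one {d : ℕ} {z : ℝ} (h0 : 0 ≤ z) (h1 : z ≤ 1) : W d z = z ^ d :=
  min_eq_right (pow_le_one₀ h0 h1)

theorem W_of_one_le {d : ℕ} {z : ℝ} (h1 : 1 ≤ z) : W d z = 1 :=
  min_eq_left (one_le_pow₀ h1)

theorem continuous_W_div (d : ℕ) (a : ℝ) : Continuous fun u : ℝ => W d (u / a) :=
  continuous_const.min ((continuous_id.div_const a).pow d)

theorem continuous_W_div_mul_self (d : ℕ) (a : ℝ) : Continuous fun u : ℝ => W d (u / a) * u :=
  (continuous_W_div d a).mul continuous_id'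

theorem W_div_sub_W_div_eq_zero (d : ℕ) {t s u : ℝ} (ht : 0 < t) (hts : t ≤ s) (hu : s < u) :
    W d (u / t) - W d (u / s) = 0 := by
  rw [W_of_one_le ((one_le_div ht).2 (hts.trans hu.le)),
    W_of_one_le ((one_le_div (ht.trans_le hts)).2 hu.le), sub_self]

theorem intervalIntegral_W_div_mul_self (d : ℕ) {a c : ℝ} (ha : 0 < a) (hac : a ≤ c) :
    ∫ u in (0 : ℝ)..c, W d (u / a) * u = a ^ 2 / ((d : ℝ) + 2) + (c ^ 2 - a ^ 2) / 2 := by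
  have h_inner : ∫ u in (0 : ℝ)..a, W d (u / a) * u = a ^ 2 / ((d : ℝ) + 2) := by
    have h_pow : EqOn (fun u => W d (u / a) * u) (fun u => u ^ (d + 1) / a ^ d) (uIcc 0 a) := by
      intro u hu
      rw [uIcc_of_le ha.le] at hu
      simp only [W_of_le_one (div_nonneg hu.1 ha.le) ((div_le_one ha).2 hu.2), div_pow, pow_succ]
      ring
    rw [intervalIntegral.integral_congr h_pow, intervalIntegral.integral_div, integral_pow]
    field_simp
    push_cast
    ring
  have h_outer : ∫ u in a..c, W d (u / a) * u = (c ^ 2 - a ^ 2) / 2 := by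
    have h_id : EqOn (fun u => W d (u / a) * u) (fun u => u) (uIcc a c) := by
      intro u hu
      rw [uIcc_of_le hac] at hu
      simp [W_of_one_le ((one_le_div ha).2 hu.1)]
    rw [intervalIntegral.integral_congr h_id, integral_id]
  rw [← intervalIntegral.integral_add_adjacent_intervals
    ((continuous_W_div_mul_self d a).intervalIntegrable 0 a)
    ((continuous_W_div_mul_self d a).intervalIntegrable a c), h_inner, h_outer]

theorem integrableOn_Ioi_W_div_sub_W_div_mul_self (d : ℕ) {t s : ℝ} (ht : 0 < t) (hts : t ≤ s) :
    IntegrableOn (fun u => (W d (u / t) - W d (u / s)) * u) (Ioi 0) :=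
  (((continuous_W_div d t).sub (continuous_W_div d s)).mul continuous_id').integrableOn_Ioc
    |>.of_forall_sdiff_eq_zero measurableSet_Ioi fun u hu => by
      show (W d (u / t) - W d (u / s)) * u = 0
      rw [W_div_sub_W_div_eq_zero d ht hts (lt_of_not_ge fun h => hu.2 ⟨hu.1, h⟩), zero_mul]

theorem integral_Ioi_W_div_sub_W_div_mul_self (d : ℕ) {t s : ℝ} (ht : 0 < t) (hts : t ≤ s) :
    ∫ u in Ioi 0, (W d (u / t) - W d (u / s)) * u
      = (s ^ 2 - t ^ 2) * d / (2 * ((d : ℝ) + 2)) := by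
  have hs := ht.trans_le hts
  rw [setIntegral_eq_of_subset_of_forall_sdiff_eq_zero measurableSet_Ioi Ioc_subset_Ioi_self
    fun u hu => by
      rw [W_div_sub_W_div_eq_zero d ht hts (lt_of_not_ge fun h => hu.2 ⟨hu.1, h⟩), zero_mul],
    ← intervalIntegral.integral_of_le hs.le]
  simp_rw [sub_mul]
  rw [intervalIntegral.integral_sub ((continuous_W_div_mul_self d t).intervalIntegrable _ _)
    ((continuous_W_div_mul_self d s).intervalIntegrable _ _),
    intervalIntegral_W_div_mul_self d ht hts, intervalIntegral_W_div_mul_self d hs le_rfl]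
  field_simp
  ring

/-- `∫_{ℝ^d} h_{s,t,x}(y) dy = (s² − t²)/(2(d+2))`. -/
theorem stmt_7 (d : ℕ) (hd : 1 ≤ d) (x : Euc d) (t s : ℝ) (ht : 0 < t) (hts : t < s) :
    ∫ y, hst d s t x y = (s ^ 2 - t ^ 2) / (2 * ((d : ℝ) + 2)) := by
  have h_ball : 0 < volume.real (ball (0 : Euc d) 1) :=
    ENNReal.toReal_pos (measure_ball_pos volume _ one_pos).ne' measure_ball_lt_top.ne
  have h_radial : EqOn
      (fun u => u ^ finrank ℝ (Euc d) * ((W d (u / t) - W d (u / s)) / (Cd d * u ^ (d - 1))))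
      (fun u => (W d (u / t) - W d (u / s)) * u / Cd d) (Ioi 0) := by
    intro u (hu : 0 < u)
    obtain ⟨n, rfl⟩ := Nat.exists_eq_add_of_le' hd
    dsimp only
    rw [finrank_euclideanSpace_fin, Nat.add_sub_cancel, pow_succ]
    field_simp
  unfold hst
  rw [integral_integral_Ioi_dist volume x
      ((integrableOn_congr_fun h_radial measurableSet_Ioi).2
        ((integrableOn_Ioi_W_div_sub_W_div_mul_self d ht hts.le).div_const _)),
    setIntegral_congr_fun measurableSet_Ioi h_radial, integral_div,
    integral_Ioi_W_div_sub_W_div_mul_self d ht hts.le, Cd_eq_mul_volume_real_ball hd]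
  field_simp

end
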